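/- arXiv:0907.5125 — 3 statements merged into one kernel-verified Lean document; each statement's English description precedes it below -/
import Mathlib

section
/- The intersection of a context-free hedge automaton language with a hedge automaton language is a context-free hedge automaton language. -/
/-- Unranked terms over an alphabet `α`: a node labeled by a symbol of `α`
with a hedge (finite list) of subterms. -/
inductive UTerm (α : Type) : Type
  | node : α → List (UTerm α) → UTerm α

/-- A hedge automaton: transitions `a(L) → q` with `L ⊆ Q*` a regular word language. -/
structure HA (α Q : Type) where
  final : Set Q
  trans : List (α × Language Q × Q)
  regular : ∀ r ∈ trans, r.2.1.IsRegular

/-- Bottom-up reduction of a term to a state. -/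
inductive HA.Reduce {α Q : Type} (A : HA α Q) : UTerm α → Q → Prop
  | node {a : α} {ts : List (UTerm α)} {qs : List Q} {L : Language Q} {q : Q} :
      (a, L, q) ∈ A.trans → qs ∈ L → ts.length = qs.length →
      (∀ p ∈ List.zip ts qs, A.Reduce p.1 p.2) →
      A.Reduce (UTerm.node a ts) q

/-- Language of terms accepted by a hedge automaton. -/
def HA.lang {α Q : Type} (A : HA α Q) : Set (UTerm α) :=
  { t | ∃ q ∈ A.final, A.Reduce t q }

/-- A set of terms is a hedge-automaton language. -/
def IsHALang {α : Type} (L : Set (UTerm α)) : Prop :=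
  ∃ (Q : Type) (_ : Fintype Q) (A : HA α Q), A.lang = L

/-- A context-free hedge automaton: transitions `a(L) → q` with `L ⊆ Q*` context-free. -/
structure CFHA (α Q : Type) where
  final : Set Q
  trans : List (α × Language Q × Q)
  contextFree : ∀ r ∈ trans, r.2.1.IsContextFree

/-- Bottom-up reduction of a term to a state of a CF-HA. -/
inductive CFHA.Reduce {α Q : Type} (A : CFHA α Q) : UTerm α → Q → Prop
  | node {a : α} {ts : List (UTerm α)} {qs : List Q} {L : Language Q} {q : Q} :
      (a, L, q) ∈ A.trans → qs ∈ L → ts.length = qs.length →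
      (∀ p ∈ List.zip ts qs, A.Reduce p.1 p.2) →
      A.Reduce (UTerm.node a ts) q

/-- Language of terms accepted by a CF-HA. -/
def CFHA.lang {α Q : Type} (A : CFHA α Q) : Set (UTerm α) :=
  { t | ∃ q ∈ A.final, A.Reduce t q }

/-- A set of terms is a CF-HA language. -/
def IsCFHALang {α : Type} (L : Set (UTerm α)) : Prop :=
  ∃ (Q : Type) (_ : Fintype Q) (A : CFHA α Q), A.lang = L

/-!
Take the product of the two automata: a term reduces to `(q, q')` iff it reduces to `q` in the
CF-HA and to `q'` in the HA. A product transition reads the state words whose first projection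
lies in a context-free language `L` and whose second projection lies in a regular language `M`;
this language is context free by the Bar-Hillel triple construction, which annotates every
nonterminal of a grammar for `L` with the states of a DFA for `M` at which its yield begins and
ends.
-/

open ContextFreeGrammar ContextFreeRule

lemma ContextFreeRule.Rewrites.eq_output_of_singleton {T N : Type*} {r : ContextFreeRule T N}
    {A : N} {v : List (Symbol T N)} (h : r.Rewrites [.nonterminal A] v) :
    r.input = A ∧ v = r.output := by
  cases h with
  | head => simp
  | cons _ h => nomatch h

theorem Language.IsRegular.preimage_map {T T' : Type*} {M : Language T} (hM : M.IsRegular)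
    (f : T' → T) : Language.IsRegular (List.map f ⁻¹' M) := by
  obtain ⟨σ, _, D, rfl⟩ := hM
  exact ⟨σ, inferInstance, D.comap f, D.accepts_comap f⟩

namespace BarHillel

variable {T T' N : Type*} {σ : Type}

/-- `Lift D v s s' u`: the sentential form `u` is `v` with every terminal `a` paired with a letter
`b`, and every nonterminal `A` tagged `(t, A, t')` by a guess of the states of `D` before and after
reading its yield, consistently along a run of `D` from `s` to `s'`. -/
inductive Lift (D : DFA (T × T') σ) : List (Symbol T N) → σ → σ →
    List (Symbol (T × T') (Option (σ × N × σ))) → Prop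
  | nil (s : σ) : Lift D [] s s []
  | terminal {v : List (Symbol T N)} {s s' : σ} {u} (a : T) (b : T')
      (h : Lift D v (D.step s (a, b)) s' u) :
      Lift D (.terminal a :: v) s s' (.terminal (a, b) :: u)
  | nonterminal {v : List (Symbol T N)} {s' : σ} {u} (A : N) (s t : σ)
      (h : Lift D v t s' u) :
      Lift D (.nonterminal A :: v) s s' (.nonterminal (some (s, A, t)) :: u)

variable {D : DFA (T × T') σ}

namespace Lift

theorem append {v₁ v₂ : List (Symbol T N)} {s t s' : σ} {u₁ u₂}
    (h₁ : Lift D v₁ s t u₁) (h₂ : Lift D v₂ t s' u₂) :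
    Lift D (v₁ ++ v₂) s s' (u₁ ++ u₂) := by
  induction h₁ with
  | nil => exact h₂
  | terminal a b _ ih => exact .terminal a b (ih h₂)
  | nonterminal A s t _ ih => exact .nonterminal A s t (ih h₂)

theorem split_form {v₁ v₂ : List (Symbol T N)} {s s' : σ} {u}
    (h : Lift D (v₁ ++ v₂) s s' u) :
    ∃ t u₁ u₂, u = u₁ ++ u₂ ∧ Lift D v₁ s t u₁ ∧ Lift D v₂ t s' u₂ := by
  induction v₁ generalizing s u with
  | nil => exact ⟨s, [], u, rfl, .nil s, h⟩
  | cons x v₁ ih =>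
    cases h with
    | terminal a b h =>
      obtain ⟨t, u₁, u₂, rfl, h₁, h₂⟩ := ih h
      exact ⟨t, _ :: u₁, u₂, rfl, .terminal a b h₁, h₂⟩
    | nonterminal A s t h =>
      obtain ⟨t', u₁, u₂, rfl, h₁, h₂⟩ := ih h
      exact ⟨t', _ :: u₁, u₂, rfl, .nonterminal A s t h₁, h₂⟩

theorem split_lift {v : List (Symbol T N)} {s s' : σ}
    {u₁ u₂ : List (Symbol (T × T') (Option (σ × N × σ)))}
    (h : Lift D v s s' (u₁ ++ u₂)) :
    ∃ t v₁ v₂, v = v₁ ++ v₂ ∧ Lift D v₁ s t u₁ ∧ Lift D v₂ t s' u₂ := by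
  induction u₁ generalizing v s with
  | nil => exact ⟨s, [], v, rfl, .nil s, h⟩
  | cons x u₁ ih =>
    cases h with
    | terminal a b h =>
      obtain ⟨t, v₁, v₂, rfl, h₁, h₂⟩ := ih h
      exact ⟨t, _ :: v₁, v₂, rfl, .terminal a b h₁, h₂⟩
    | nonterminal A s t h =>
      obtain ⟨t', v₁, v₂, rfl, h₁, h₂⟩ := ih h
      exact ⟨t', _ :: v₁, v₂, rfl, .nonterminal A s t h₁, h₂⟩

theorem eq_of_singleton_nonterminal {v : List (Symbol T N)} {s s' t t' : σ} {A : N}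
    (h : Lift D v s s' [.nonterminal (some (t, A, t'))]) :
    v = [.nonterminal A] ∧ s = t ∧ s' = t' := by
  cases h with
  | nonterminal A s t h => cases h; exact ⟨rfl, rfl, rfl⟩

theorem map_terminal_iff {v : List (Symbol T N)} {s s' : σ} {w : List (T × T')} :
    Lift D v s s' (w.map .terminal) ↔
      v = w.map (.terminal ∘ Prod.fst) ∧ s' = D.evalFrom s w := by
  induction w generalizing v s with
  | nil =>
    constructor
    · rintro ⟨⟩
      exact ⟨rfl, rfl⟩
    · rintro ⟨rfl, rfl⟩
      exact .nil _
  | cons p w ih =>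
    constructor
    · rintro (_ | ⟨a, b, h⟩)
      obtain ⟨rfl, rfl⟩ := ih.1 h
      exact ⟨rfl, rfl⟩
    · rintro ⟨rfl, rfl⟩
      exact .terminal p.1 p.2 (ih.2 ⟨rfl, rfl⟩)

end Lift

theorem setOf_lift_finite [Fintype T'] [Finite σ] (v : List (Symbol T N)) (s : σ) :
    {p : σ × List (Symbol (T × T') (Option (σ × N × σ))) | Lift D v s p.1 p.2}.Finite := by
  induction v generalizing s with
  | nil =>
    refine (Set.finite_singleton (s, [])).subset ?_
    rintro ⟨s', u⟩ ⟨⟩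
    rfl
  | cons x v ih =>
    cases x with
    | terminal a =>
      refine (Set.finite_iUnion fun b : T' => (ih (D.step s (a, b))).image
        fun p => (p.1, .terminal (a, b) :: p.2)).subset ?_
      rintro ⟨s', _⟩ (_ | @⟨_, _, _, u, a, b, h⟩)
      exact Set.mem_iUnion.2 ⟨b, (s', u), h, rfl⟩
    | nonterminal A =>
      refine (Set.finite_iUnion fun t : σ => (ih t).image
        fun p => (p.1, .nonterminal (some (s, A, t)) :: p.2)).subset ?_
      rintro ⟨s', _⟩ (_ | _ | @⟨_, _, u, A, s, t, h⟩)
      exact Set.mem_iUnion.2 ⟨t, (s', u), h, rfl⟩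

section Grammar

variable [Fintype T'] [Fintype σ] (G : ContextFreeGrammar T) (D : DFA (T × T') σ)

/-- `none` is a fresh start symbol, which guesses the accepting state reached at the end. -/
def rules : Set (ContextFreeRule (T × T') (Option (σ × G.NT × σ))) :=
  {r | ∃ f ∈ D.accept, r = ⟨none, [.nonterminal (some (D.start, G.initial, f))]⟩} ∪
  {r | ∃ r₀ ∈ G.rules, ∃ s t u,
    Lift D r₀.output s t u ∧ r = ⟨some (s, r₀.input, t), u⟩}

theorem rules_finite : (rules G D).Finite := by
  refine .union ((Set.finite_range fun f : σ =>
    (⟨none, [.nonterminal (some (D.start, G.initial, f))]⟩ :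
      ContextFreeRule (T × T') (Option (σ × G.NT × σ)))).subset ?_) ?_
  · rintro r ⟨f, -, rfl⟩
    exact ⟨f, rfl⟩
  · refine (G.rules.finite_toSet.biUnion fun r₀ _ => Set.finite_iUnion fun s : σ =>
      (setOf_lift_finite (D := D) r₀.output s).image fun p =>
        (⟨some (s, r₀.input, p.1), p.2⟩ :
          ContextFreeRule (T × T') (Option (σ × G.NT × σ))))
      |>.subset ?_
    rintro r ⟨r₀, hr₀, s, t, u, hu, rfl⟩
    exact Set.mem_biUnion hr₀ (Set.mem_iUnion.2 ⟨s, (t, u), hu, rfl⟩)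

noncomputable def grammar : ContextFreeGrammar (T × T') :=
  ⟨Option (σ × G.NT × σ), none, (rules_finite G D).toFinset⟩

variable {G D}

theorem mem_grammar_rules {r : ContextFreeRule (T × T') (Option (σ × G.NT × σ))} :
    r ∈ (grammar G D).rules ↔ r ∈ rules G D :=
  Set.Finite.mem_toFinset _

theorem exists_lift_of_produces {u u' : List (Symbol (T × T') (Option (σ × G.NT × σ)))}
    {v : List (Symbol T G.NT)} {s s' : σ}
    (h : (grammar G D).Produces u u') (hv : Lift D v s s' u) :
    ∃ v', G.Derives v v' ∧ Lift D v' s s' u' := by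
  obtain ⟨r, hr, hrw⟩ := h
  obtain ⟨p, q, rfl, rfl⟩ := hrw.exists_parts
  rw [List.append_assoc] at hv
  obtain ⟨t, v₁, v₂₃, rfl, hp, h₂₃⟩ := hv.split_lift
  obtain ⟨t', v₂, v₃, rfl, hA, hq⟩ :=
    Lift.split_lift (u₁ := [.nonterminal r.input]) h₂₃
  rcases mem_grammar_rules.1 hr with ⟨f, -, rfl⟩ | ⟨r₀, hr₀, s₀, s₁, u, hu, rfl⟩
  · nomatch hA
  obtain ⟨rfl, rfl, rfl⟩ := hA.eq_of_singleton_nonterminal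
  refine ⟨v₁ ++ r₀.output ++ v₃, .single ⟨r₀, hr₀, ?_⟩, ?_⟩
  · simpa only [List.append_assoc] using r₀.rewrites_of_exists_parts v₁ v₃
  · rw [List.append_assoc, List.append_assoc]
    exact hp.append (hu.append hq)

theorem exists_lift_of_derives {u u' : List (Symbol (T × T') (Option (σ × G.NT × σ)))}
    {v : List (Symbol T G.NT)} {s s' : σ}
    (h : (grammar G D).Derives u u') (hv : Lift D v s s' u) :
    ∃ v', G.Derives v v' ∧ Lift D v' s s' u' := by
  induction h with
  | refl => exact ⟨v, .refl v, hv⟩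
  | tail _ hstep ih =>
    obtain ⟨v', hvv', hv'⟩ := ih
    obtain ⟨v'', hv'v'', hv''⟩ := exists_lift_of_produces hstep hv'
    exact ⟨v'', hvv'.trans hv'v'', hv''⟩

theorem exists_lift_derives_of_derives {v : List (Symbol T G.NT)} {w : List (T × T')}
    (h : G.Derives v (w.map (.terminal ∘ Prod.fst))) (s : σ) :
    ∃ u, Lift D v s (D.evalFrom s w) u ∧ (grammar G D).Derives u (w.map .terminal) := by
  induction h using Relation.ReflTransGen.head_induction_on generalizing s with
  | refl => exact ⟨w.map .terminal, Lift.map_terminal_iff.2 ⟨rfl, rfl⟩, .refl _⟩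
  | head hstep _ ih =>
    obtain ⟨r₀, hr₀, hrw⟩ := hstep
    obtain ⟨p, q, rfl, rfl⟩ := hrw.exists_parts
    obtain ⟨u, hu, hd⟩ := ih s
    rw [List.append_assoc] at hu
    obtain ⟨t, u₁, u₂₃, rfl, hp, h₂₃⟩ := hu.split_form
    obtain ⟨t', u₂, u₃, rfl, hout, hq⟩ := h₂₃.split_form
    have hr : (⟨some (t, r₀.input, t'), u₂⟩ : ContextFreeRule _ _) ∈
        (grammar G D).rules :=
      mem_grammar_rules.2 (.inr ⟨r₀, hr₀, t, t', u₂, hout, rfl⟩)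
    refine ⟨u₁ ++ [.nonterminal (some (t, r₀.input, t'))] ++ u₃, ?_, ?_⟩
    · simpa only [List.append_assoc, List.singleton_append] using
        hp.append (.nonterminal r₀.input t t' hq)
    · rw [← List.append_assoc] at hd
      exact Produces.trans_derives ⟨_, hr, rewrites_of_exists_parts _ u₁ u₃⟩ hd

theorem grammar_language :
    (grammar G D).language = List.map Prod.fst ⁻¹' G.language ⊓ D.accepts := by
  ext w
  constructor
  · intro hw
    rcases hw.eq_or_head with heq | ⟨u, ⟨r, hr, hrw⟩, hd⟩
    · cases w <;> simp at heq
    obtain ⟨hin, rfl⟩ := hrw.eq_output_of_singleton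
    rcases mem_grammar_rules.1 hr with ⟨f, hf, rfl⟩ | ⟨r₀, -, s, t, u, -, rfl⟩
    · obtain ⟨v, hv, hlift⟩ :=
        exists_lift_of_derives hd (.nonterminal G.initial D.start f (.nil f))
      obtain ⟨rfl, rfl⟩ := Lift.map_terminal_iff.1 hlift
      refine ⟨?_, hf⟩
      change G.Derives _ _
      rwa [List.map_map]
    · cases hin
  · rintro ⟨hw, hacc⟩
    replace hw : G.Derives _ _ := hw
    rw [List.map_map] at hw
    obtain ⟨u, hu, hd⟩ := exists_lift_derives_of_derives (D := D) hw D.start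
    obtain _ | _ | ⟨_, _, _, ⟨⟩⟩ := hu
    have hr : (⟨none, [.nonterminal (some (D.start, G.initial, D.eval w))]⟩ :
        ContextFreeRule _ _) ∈ (grammar G D).rules :=
      mem_grammar_rules.2 (.inl ⟨_, hacc, rfl⟩)
    exact Produces.trans_derives ⟨_, hr, Rewrites.input_output⟩ hd

end Grammar

end BarHillel

theorem Language.IsContextFree.preimage_fst_inf {T T' : Type*} [Fintype T'] {L : Language T}
    {M : Language (T × T')} (hL : L.IsContextFree) (hM : M.IsRegular) :
    Language.IsContextFree (List.map Prod.fst ⁻¹' L ⊓ M) := by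
  obtain ⟨G, rfl⟩ := hL
  obtain ⟨σ, _, D, rfl⟩ := hM
  exact ⟨BarHillel.grammar G D, BarHillel.grammar_language⟩

theorem List.Forall₂.zip {α β γ : Type*} {R : α → β → Prop} {S : α → γ → Prop}
    {l : List α} {l₁ : List β} {l₂ : List γ}
    (h₁ : Forall₂ R l l₁) (h₂ : Forall₂ S l l₂) :
    Forall₂ (fun a p => R a p.1 ∧ S a p.2) l (l₁.zip l₂) := by
  induction h₁ generalizing l₂ with
  | nil => cases h₂; exact .nil
  | cons hR _ ih =>
    cases h₂ with
    | cons hS h₂ => exact .cons ⟨hR, hS⟩ (ih h₂)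

section Product

variable {α Q Q' : Type}

theorem CFHA.reduce_node_iff {A : CFHA α Q} {a : α} {ts : List (UTerm α)} {q : Q} :
    A.Reduce (.node a ts) q ↔
      ∃ L qs, (a, L, q) ∈ A.trans ∧ qs ∈ L ∧ ts.Forall₂ A.Reduce qs := by
  constructor
  · rintro ⟨hmem, hqs, hlen, hch⟩
    exact ⟨_, _, hmem, hqs, List.forall₂_iff_zip.2 ⟨hlen, fun h => hch _ h⟩⟩
  · rintro ⟨L, qs, hmem, hqs, hch⟩
    obtain ⟨hlen, hch⟩ := List.forall₂_iff_zip.1 hch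
    exact .node hmem hqs hlen fun _ hp => hch hp

theorem HA.reduce_node_iff {A : HA α Q} {a : α} {ts : List (UTerm α)} {q : Q} :
    A.Reduce (.node a ts) q ↔
      ∃ L qs, (a, L, q) ∈ A.trans ∧ qs ∈ L ∧ ts.Forall₂ A.Reduce qs := by
  constructor
  · rintro ⟨hmem, hqs, hlen, hch⟩
    exact ⟨_, _, hmem, hqs, List.forall₂_iff_zip.2 ⟨hlen, fun h => hch _ h⟩⟩
  · rintro ⟨L, qs, hmem, hqs, hch⟩
    obtain ⟨hlen, hch⟩ := List.forall₂_iff_zip.1 hch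
    exact .node hmem hqs hlen fun _ hp => hch hp

namespace CFHA

variable [DecidableEq α] [Fintype Q']

def prod (A : CFHA α Q) (B : HA α Q') : CFHA α (Q × Q') where
  final := A.final ×ˢ B.final
  trans := A.trans.flatMap fun r => (B.trans.filter (·.1 = r.1)).map fun r' =>
    (r.1, List.map Prod.fst ⁻¹' r.2.1 ⊓ List.map Prod.snd ⁻¹' r'.2.1, (r.2.2, r'.2.2))
  contextFree := by
    simp only [List.mem_flatMap, List.mem_map, List.mem_filter]
    rintro _ ⟨r, hr, r', ⟨hr', -⟩, rfl⟩
    exact (A.contextFree r hr).preimage_fst_inf ((B.regular r' hr').preimage_map Prod.snd)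

variable {A : CFHA α Q} {B : HA α Q'}

theorem mem_prod_trans {a : α} {K : Language (Q × Q')} {p : Q × Q'} :
    (a, K, p) ∈ (A.prod B).trans ↔
      ∃ L M, (a, L, p.1) ∈ A.trans ∧ (a, M, p.2) ∈ B.trans ∧
        K = List.map Prod.fst ⁻¹' L ⊓ List.map Prod.snd ⁻¹' M := by
  simp only [prod, List.mem_flatMap, List.mem_map, List.mem_filter, decide_eq_true_eq]
  constructor
  · rintro ⟨⟨a, L, q⟩, hr, ⟨a', M, q'⟩, ⟨hr', rfl⟩, h⟩
    simp only [Prod.mk.injEq] at h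
    obtain ⟨rfl, rfl, rfl⟩ := h
    exact ⟨L, M, hr, hr', rfl⟩
  · rintro ⟨L, M, hL, hM, rfl⟩
    exact ⟨_, hL, _, ⟨hM, rfl⟩, rfl⟩

theorem Reduce.of_prod {t : UTerm α} {p : Q × Q'} (h : (A.prod B).Reduce t p) :
    A.Reduce t p.1 ∧ B.Reduce t p.2 := by
  induction h with
  | @node a ts qs K p hmem hqs hlen _ ih =>
    obtain ⟨L, M, hL, hM, rfl⟩ := mem_prod_trans.1 hmem
    have hch := List.forall₂_iff_zip.2 ⟨hlen, fun h => ih _ h⟩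
    exact ⟨reduce_node_iff.2 ⟨L, _, hL, hqs.1,
        List.forall₂_map_right_iff.2 (hch.imp fun _ _ h => h.1)⟩,
      HA.reduce_node_iff.2 ⟨M, _, hM, hqs.2,
        List.forall₂_map_right_iff.2 (hch.imp fun _ _ h => h.2)⟩⟩

theorem Reduce.prod {t : UTerm α} {q : Q} {q' : Q'} (h : A.Reduce t q) (h' : B.Reduce t q') :
    (A.prod B).Reduce t (q, q') := by
  induction h generalizing q' with
  | @node a ts qs L q hmem hqs hlen _ ih =>
    obtain ⟨M, qs', hM, hqs', hch'⟩ := HA.reduce_node_iff.1 h'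
    have hch : ts.Forall₂ (fun t q => ∀ q', B.Reduce t q' → (A.prod B).Reduce t (q, q')) qs :=
      List.forall₂_iff_zip.2 ⟨hlen, fun h _ => ih _ h⟩
    refine reduce_node_iff.2 ⟨_, _, mem_prod_trans.2 ⟨L, M, hmem, hM, rfl⟩, ⟨?_, ?_⟩,
      (hch.zip hch').imp fun _ _ h => h.1 _ h.2⟩
    · show (qs.zip qs').map Prod.fst ∈ L
      rwa [List.map_fst_zip (hlen.symm.trans hch'.length_eq).le]
    · show (qs.zip qs').map Prod.snd ∈ M
      rwa [List.map_snd_zip (hch'.length_eq.symm.trans hlen).le]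

theorem lang_prod : (A.prod B).lang = A.lang ∩ B.lang := by
  ext t
  constructor
  · rintro ⟨p, ⟨hp₁, hp₂⟩, h⟩
    exact ⟨⟨p.1, hp₁, h.of_prod.1⟩, ⟨p.2, hp₂, h.of_prod.2⟩⟩
  · rintro ⟨⟨q, hq, h⟩, ⟨q', hq', h'⟩⟩
    exact ⟨(q, q'), ⟨hq, hq'⟩, h.prod h'⟩

end CFHA

end Product

theorem cfha_inter_ha_isCFHALang_general {α : Type}
    {L₁ L₂ : Set (UTerm α)} (h₁ : IsCFHALang L₁) (h₂ : IsHALang L₂) :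
    IsCFHALang (L₁ ∩ L₂) := by
  classical
  obtain ⟨Q₁, _, A₁, rfl⟩ := h₁
  obtain ⟨Q₂, _, A₂, rfl⟩ := h₂
  exact ⟨Q₁ × Q₂, inferInstance, A₁.prod A₂, CFHA.lang_prod⟩

/-- the intersection of a CF-HA language with an HA language
is a CF-HA language. -/
theorem cfha_inter_ha_isCFHALang {α : Type} [Fintype α]
    {L₁ L₂ : Set (UTerm α)} (h₁ : IsCFHALang L₁) (h₂ : IsHALang L₂) :
    IsCFHALang (L₁ ∩ L₂) :=
  cfha_inter_ha_isCFHALang_general h₁ h₂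
end

section
/- Let Σ = {a,b,c,c'} and let R be the (unparametrized) rewrite system with the two rules c(x) → c'(a x) and c'(x) → c(x b), where rewriting applies at any position in an unranked term and x matches the hedge of children. Then the set of terms over {a,b,c} reachable from the single-node term c by R-rewriting is exactly {c(aⁿbⁿ) | n ≥ 0}, and hence post*_R({c}) ∩ T({a,b,c}) is not a hedge-automaton language. -/
/-- The alphabet `{a, b, c, c'}` as `Fin 4` with `a = 0`, `b = 1`, `c = 2`, `c' = 3`.
One-step rewriting by the rules `c(x) → c'(a x)` and `c'(x) → c(x b)`,
applied at an arbitrary position. -/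
inductive Step7 : List (UTerm (Fin 4)) → List (UTerm (Fin 4)) → Prop
  | rule1 (h : List (UTerm (Fin 4))) :
      Step7 [UTerm.node 2 h] [UTerm.node 3 (UTerm.node 0 [] :: h)]
  | rule2 (h : List (UTerm (Fin 4))) :
      Step7 [UTerm.node 3 h] [UTerm.node 2 (h ++ [UTerm.node 1 []])]
  | context {u v h h'} : Step7 h h' → Step7 (u ++ h ++ v) (u ++ h' ++ v)
  | under {f h h'} : Step7 h h' → Step7 [UTerm.node f h] [UTerm.node f h']

/-- A term over `{a,b,c}`, i.e. with no occurrence of `c'`. -/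
inductive NoC' : UTerm (Fin 4) → Prop
  | node {f : Fin 4} {ts : List (UTerm (Fin 4))} :
      f ≠ 3 → (∀ t ∈ ts, NoC' t) → NoC' (UTerm.node f ts)

/-- The term `c(aⁿbⁿ)`. -/
def cab (n : ℕ) : UTerm (Fin 4) :=
  UTerm.node 2
    (List.replicate n (UTerm.node 0 []) ++ List.replicate n (UTerm.node 1 []))

open Filter Computability

theorem Language.IsRegular.eventually_pumping {α : Type*} {L : Language α} (hL : L.IsRegular) :
    ∀ᶠ N in atTop, ∀ w ∈ L, N ≤ w.length → ∃ x y z, w = x ++ y ++ z ∧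
      x.length + y.length ≤ N ∧ y ≠ [] ∧ {x} * {y}∗ * {z} ≤ L := by
  obtain ⟨σ, _, M, rfl⟩ := hL
  filter_upwards [eventually_ge_atTop (Fintype.card σ)] with N hN w hw hlen
  obtain ⟨x, y, z, rfl, hxy, hy, hpump⟩ := M.pumping_lemma hw (hN.trans hlen)
  exact ⟨x, y, z, rfl, hxy.trans hN, hy, hpump⟩

theorem List.Forall₂.exists_append_of_right {α β : Type*} {R : α → β → Prop} {l : List α}
    {l₁ l₂ : List β} (h : Forall₂ R l (l₁ ++ l₂)) :
    ∃ m₁ m₂, l = m₁ ++ m₂ ∧ Forall₂ R m₁ l₁ ∧ Forall₂ R m₂ l₂ :=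
  ⟨_, _, (take_append_drop l₁.length l).symm, forall₂_take_append _ _ _ h,
    forall₂_drop_append _ _ _ h⟩

theorem List.eq_nil_of_pump_down_replicate_append_replicate {α : Type*} [DecidableEq α]
    {a b : α} (hab : a ≠ b) {n m : ℕ} {x y z : List α}
    (h : x ++ y ++ z = replicate n a ++ replicate n b) (hxy : x.length + y.length ≤ n)
    (h' : x ++ z = replicate m a ++ replicate m b) : y = [] := by
  have hprefix : x ++ y = replicate (x.length + y.length) a := by
    rw [← take_left (l₁ := x ++ y) (l₂ := z), h, length_append,
      take_append_of_le_length (by simpa using hxy), take_replicate, min_eq_left hxy]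
  have hx := congrArg (count b) hprefix
  have h₁ := congrArg (count b) h
  have h₂ := congrArg (count b) h'
  have l₁ := congrArg length h
  have l₂ := congrArg length h'
  simp only [count_append, count_replicate, beq_iff_eq, hab, if_false, if_true, length_append,
    length_replicate] at hx h₁ h₂ l₁ l₂
  exact eq_nil_of_length_eq_zero (by omega)

namespace HA

variable {α Q : Type} (A : HA α Q)

theorem reduce_node_iff_s7 {f : α} {ts : List (UTerm α)} {q : Q} :
    A.Reduce (.node f ts) q ↔
      ∃ L, (f, L, q) ∈ A.trans ∧ ∃ qs ∈ L, List.Forall₂ A.Reduce ts qs := by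
  constructor
  · rintro ⟨htr, hqs, hlen, hred⟩
    exact ⟨_, htr, _, hqs, List.forall₂_iff_zip.2 ⟨hlen, fun h => hred _ h⟩⟩
  · rintro ⟨L, htr, qs, hqs, hred⟩
    obtain ⟨hlen, hzip⟩ := List.forall₂_iff_zip.1 hred
    exact .node htr hqs hlen fun p hp => hzip hp

theorem eventually_pump_down :
    ∀ᶠ N in atTop, ∀ f ts, UTerm.node f ts ∈ A.lang → N ≤ ts.length →
      ∃ tx ty tz, ts = tx ++ ty ++ tz ∧ tx.length + ty.length ≤ N ∧ ty ≠ [] ∧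
        UTerm.node f (tx ++ tz) ∈ A.lang := by
  filter_upwards [A.trans.finite_toSet.eventually_all.2 fun r hr =>
    (A.regular r hr).eventually_pumping] with N hN f ts ⟨q, hq, hred⟩ hlen
  obtain ⟨L, hr, qs, hqs, hts⟩ := A.reduce_node_iff_s7.1 hred
  obtain ⟨x, y, z, rfl, hxy, hy, hpump⟩ := hN _ hr qs hqs (hts.length_eq ▸ hlen)
  obtain ⟨txy, tz, rfl, htxy, htz⟩ := hts.exists_append_of_right
  obtain ⟨tx, ty, rfl, htx, hty⟩ := htxy.exists_append_of_right
  refine ⟨tx, ty, tz, rfl, by rwa [htx.length_eq, hty.length_eq], ?_, q, hq,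
    A.reduce_node_iff_s7.2 ⟨L, hr, x ++ z, hpump ?_, List.rel_append htx htz⟩⟩
  · rintro rfl
    exact hy (List.forall₂_nil_left_iff.1 hty)
  · exact Language.mem_mul.2 ⟨x, Language.mem_mul.2 ⟨x, rfl, [], Language.nil_mem_kstar _,
      List.append_nil x⟩, z, rfl, rfl⟩

end HA

local notation "𝐚" => UTerm.node (0 : Fin 4) []
local notation "𝐛" => UTerm.node (1 : Fin 4) []

theorem not_isHALang_cab : ¬ IsHALang {t | ∃ n, t = cab n} := by
  classical
  rintro ⟨Q, _, A, hA⟩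
  obtain ⟨N, hN⟩ := A.eventually_pump_down.exists
  obtain ⟨tx, ty, tz, hsplit, hxy, hy, hpumped⟩ :=
    hN 2 _ (hA ▸ ⟨N, rfl⟩ : cab N ∈ A.lang) (by simp)
  obtain ⟨m, hm⟩ : UTerm.node 2 (tx ++ tz) ∈ {t | ∃ n, t = cab n} := hA ▸ hpumped
  exact hy <| List.eq_nil_of_pump_down_replicate_append_replicate (a := 𝐚) (b := 𝐛) (by simp)
    hsplit.symm hxy (UTerm.node.inj hm).2

def cab' (n : ℕ) : UTerm (Fin 4) :=
  UTerm.node 3 (List.replicate (n + 1) 𝐚 ++ List.replicate n 𝐛)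

namespace Step7

theorem ne_nil {h h' : List (UTerm (Fin 4))} (s : Step7 h h') : h ≠ [] := by
  induction s with
  | context _ ih => simp_all
  | _ => simp

theorem singleton_inv {t : UTerm (Fin 4)} {l : List (UTerm (Fin 4))} (s : Step7 [t] l) :
    (∃ h, t = .node 2 h ∧ l = [.node 3 (𝐚 :: h)]) ∨
    (∃ h, t = .node 3 h ∧ l = [.node 2 (h ++ [𝐛])]) ∨
    (∃ f h h', t = .node f h ∧ l = [.node f h'] ∧ Step7 h h') := by
  generalize hg : [t] = g at s
  induction s generalizing t with
  | rule1 h => exact .inl ⟨h, List.singleton_inj.1 hg, rfl⟩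
  | rule2 h => exact .inr (.inl ⟨h, List.singleton_inj.1 hg, rfl⟩)
  | @context u v h h' s ih =>
    rw [eq_comm, List.append_eq_singleton_iff, List.append_eq_singleton_iff] at hg
    rcases hg with ⟨hnil, -⟩ | ⟨⟨rfl, rfl⟩ | ⟨-, rfl⟩, rfl⟩
    · exact absurd (List.append_eq_nil_iff.1 hnil).2 s.ne_nil
    · simpa using ih rfl
    · exact absurd rfl s.ne_nil
  | under s => exact .inr (.inr ⟨_, _, _, List.singleton_inj.1 hg, rfl, s⟩)

theorem exists_mem_ne_leaf {h h' : List (UTerm (Fin 4))} (s : Step7 h h') :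
    ∃ t ∈ h, t ≠ 𝐚 ∧ t ≠ 𝐛 := by
  induction s with
  | rule1 | rule2 => simp
  | context _ ih =>
    obtain ⟨t, ht, hne⟩ := ih
    exact ⟨t, by simp [ht], hne⟩
  | under s =>
    have hne := s.ne_nil
    exact ⟨_, List.mem_singleton_self _, fun e => hne (UTerm.node.inj e).2,
      fun e => hne (UTerm.node.inj e).2⟩

theorem node_leaves_iff {f : Fin 4} {i j : ℕ} {t : UTerm (Fin 4)} :
    Step7 [.node f (List.replicate i 𝐚 ++ List.replicate j 𝐛)] [t] ↔
      (f = 2 ∧ t = .node 3 (𝐚 :: (List.replicate i 𝐚 ++ List.replicate j 𝐛))) ∨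
      (f = 3 ∧ t = .node 2 (List.replicate i 𝐚 ++ List.replicate j 𝐛 ++ [𝐛])) := by
  constructor
  · intro s
    rcases s.singleton_inv with ⟨h, he, hl⟩ | ⟨h, he, hl⟩ | ⟨g, h, h', he, -, s'⟩
    · obtain ⟨rfl, rfl⟩ := UTerm.node.inj he
      exact .inl ⟨rfl, List.singleton_inj.1 hl⟩
    · obtain ⟨rfl, rfl⟩ := UTerm.node.inj he
      exact .inr ⟨rfl, List.singleton_inj.1 hl⟩
    · obtain ⟨-, rfl⟩ := UTerm.node.inj he
      obtain ⟨u, hu, hua, hub⟩ := s'.exists_mem_ne_leaf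
      rcases List.mem_append.1 hu with hu | hu
      · exact absurd (List.eq_of_mem_replicate hu) hua
      · exact absurd (List.eq_of_mem_replicate hu) hub
  · rintro (⟨rfl, rfl⟩ | ⟨rfl, rfl⟩)
    exacts [.rule1 _, .rule2 _]

theorem cab_iff {n : ℕ} {t : UTerm (Fin 4)} : Step7 [cab n] [t] ↔ t = cab' n := by
  simp [cab, cab', node_leaves_iff, List.replicate_succ]

theorem cab'_iff {n : ℕ} {t : UTerm (Fin 4)} : Step7 [cab' n] [t] ↔ t = cab (n + 1) := by
  rw [cab', node_leaves_iff]
  simp [cab, List.replicate_succ' (n := n) (a := 𝐛)]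

end Step7

theorem reachable_cab :
    ∀ n, Relation.ReflTransGen (fun x y => Step7 [x] [y]) (.node 2 []) (cab n)
  | 0 => .refl
  | n + 1 => ((reachable_cab n).tail (Step7.cab_iff.2 rfl)).tail (Step7.cab'_iff.2 rfl)

theorem reachable_iff {t : UTerm (Fin 4)} :
    Relation.ReflTransGen (fun x y => Step7 [x] [y]) (.node 2 []) t ↔
      (∃ n, t = cab n) ∨ ∃ n, t = cab' n := by
  constructor
  · intro h
    induction h with
    | refl => exact .inl ⟨0, rfl⟩
    | tail _ s ih =>
      rcases ih with ⟨n, rfl⟩ | ⟨n, rfl⟩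
      · exact .inr ⟨n, Step7.cab_iff.1 s⟩
      · exact .inl ⟨n + 1, Step7.cab'_iff.1 s⟩
  · rintro (⟨n, rfl⟩ | ⟨n, rfl⟩)
    exacts [reachable_cab n, (reachable_cab n).tail (Step7.cab_iff.2 rfl)]

theorem noC'_cab (n : ℕ) : NoC' (cab n) := by
  refine .node (by decide) fun t ht => ?_
  rcases List.mem_append.1 ht with ht | ht <;>
    rw [List.eq_of_mem_replicate ht] <;> exact .node (by decide) (by simp)

theorem not_noC'_cab' (n : ℕ) : ¬ NoC' (cab' n) := by
  rintro ⟨h3, -⟩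
  exact h3 rfl

theorem reachable_noC'_eq :
    { t : UTerm (Fin 4) |
        Relation.ReflTransGen (fun x y => Step7 [x] [y]) (UTerm.node 2 []) t ∧ NoC' t } =
      { t | ∃ n, t = cab n } := by
  ext t
  simp only [Set.mem_ofPred_eq, reachable_iff]
  constructor
  · rintro ⟨hcab | ⟨n, rfl⟩, hnoC'⟩
    exacts [hcab, absurd hnoC' (not_noC'_cab' n)]
  · rintro ⟨n, rfl⟩
    exact ⟨.inl ⟨n, rfl⟩, noC'_cab n⟩

/-- the set of terms over `{a,b,c}` reachable from the term `c` by
the rules `c(x) → c'(a x)`, `c'(x) → c(x b)` is exactly `{c(aⁿbⁿ) | n ≥ 0}`,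
hence `post*({c}) ∩ T({a,b,c})` is not a hedge-automaton language. -/
theorem post_star_c_inter_abc :
    { t : UTerm (Fin 4) |
        Relation.ReflTransGen (fun x y => Step7 [x] [y]) (UTerm.node 2 []) t ∧
          NoC' t } =
      { t : UTerm (Fin 4) | ∃ n : ℕ, t = cab n } ∧
    ¬ IsHALang { t : UTerm (Fin 4) |
        Relation.ReflTransGen (fun x y => Step7 [x] [y]) (UTerm.node 2 []) t ∧
          NoC' t } := by
  rw [reachable_noC'_eq]
  exact ⟨rfl, not_isHALang_cab⟩
end

section
/- Let Σ = {a,b,c}, let R consist of the single vertical-deletion rule c(x) → x (replacing a c-labeled node by the hedge of its children), and let L be the set of all nested terms c(a c(a … c … b) b), i.e. the language of the HA with rules a → q_a, b → q_b, c(ε ∪ q_a q q_b) → q. Then post*_R(L) ∩ { c(w) | w ∈ {a,b}* } = { c(aⁿbⁿ) | n ≥ 0 }, and consequently post*_R(L) is not a hedge-automaton language. -/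
/-- The alphabet `{a, b, c}` as `Fin 3` with `a = 0`, `b = 1`, `c = 2`.
One-step rewriting by the single vertical-deletion rule `c(x) → x`
(splicing the children of a `c`-node into the surrounding hedge),
applied at an arbitrary position. -/
inductive Step8 : List (UTerm (Fin 3)) → List (UTerm (Fin 3)) → Prop
  | rule (h : List (UTerm (Fin 3))) : Step8 [UTerm.node 2 h] h
  | context {u v h h'} : Step8 h h' → Step8 (u ++ h ++ v) (u ++ h' ++ v)
  | under {f h h'} : Step8 h h' → Step8 [UTerm.node f h] [UTerm.node f h']

/-- The nested terms `c(a c(a … c … b) b)`: the language of the HA with rules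
`a → q_a`, `b → q_b`, `c(ε ∪ q_a q q_b) → q`. -/
inductive Nested : UTerm (Fin 3) → Prop
  | base : Nested (UTerm.node 2 [])
  | step {t : UTerm (Fin 3)} :
      Nested t → Nested (UTerm.node 2 [UTerm.node 0 [], t, UTerm.node 1 []])

/-- `post*` of the nested language under `c(x) → x`, at the level of terms. -/
def Post8 : Set (UTerm (Fin 3)) :=
  { u | ∃ t, Nested t ∧ Relation.ReflTransGen (fun x y => Step8 [x] [y]) t u }

/-! Every hedge reachable from a nested term is *balanced*: of the form `aⁱ g bⁱ` where `g` is
empty or a single `c`-node whose children are again balanced. Deleting a `c`-node keeps this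
shape, since the `a`- and `b`-blocks of its children merge with the surrounding ones. Hence a
reachable `c(w)` with `w ∈ {a,b}*` is `c(aⁿbⁿ)`, and each of these is reached from the nested
term of depth `n + 1` by deleting its inner `c`-nodes.

If a hedge automaton accepted `post*(L)`, the words of states it assigns to the children of
accepted `c`-terms would form a regular language (a finite union of horizontal languages).
Pumping inside the state word of the `aⁿ`-prefix of `c(aⁿbⁿ)` then yields an accepted
`c(aⁿ⁺ᵏbⁿ)` with `k > 0`, which is not of the above form. -/

namespace Language

variable {α : Type*}

theorem isRegular_zero : (0 : Language α).IsRegular :=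
  ⟨Unit, inferInstance, ⟨fun _ _ => (), (), ∅⟩, by ext; simp [DFA.mem_accepts]⟩

theorem isRegular_biSup_list {ι : Type*} (l : List ι) (p : ι → Prop) (L : ι → Language α)
    (hL : ∀ i ∈ l, (L i).IsRegular) : (⨆ i ∈ l, ⨆ _ : p i, L i).IsRegular := by
  induction l with
  | nil =>
    convert isRegular_zero (α := α)
    ext x
    simp [← bot_eq_zero]
  | cons i l ih =>
    have hl := ih fun j hj => hL j (List.mem_cons_of_mem i hj)
    by_cases hi : p i
    · convert (hL i List.mem_cons_self).add hl
      ext x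
      simp only [mem_iSup, mem_add, List.mem_cons]
      grind
    · convert hl using 2
      ext x
      simp only [mem_iSup, List.mem_cons]
      grind

theorem IsRegular.exists_pump_prefix {L : Language α} (hL : L.IsRegular) :
    ∃ N, ∀ x z, x ++ z ∈ L → N ≤ x.length →
      ∃ u y w, x = u ++ y ++ w ∧ y ≠ [] ∧ u ++ y ++ y ++ w ++ z ∈ L := by
  obtain ⟨σ, _, M, rfl⟩ := hL
  refine ⟨Fintype.card σ, fun x z hxz hlen => ?_⟩
  obtain ⟨q, u, y, w, rfl, -, hy, hu, hloop, -⟩ := M.evalFrom_split (s := M.start) hlen rfl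
  refine ⟨u, y, w, rfl, hy, ?_⟩
  simpa only [DFA.mem_accepts, DFA.eval, DFA.evalFrom_of_append, hu, hloop] using hxz

end Language

namespace List

variable {α β : Type*} {R : α → β → Prop}

theorem forall₂_replicate_left_iff {a : α} {n : ℕ} {l : List β} :
    Forall₂ R (replicate n a) l ↔ l.length = n ∧ ∀ b ∈ l, R a b := by
  induction l generalizing n with
  | nil => cases n <;> simp
  | cons b l ih => cases n <;> simp [replicate_succ, ih, and_left_comm]

theorem Forall₂.exists_append_right {l₁ l₂ : List α} {l : List β}
    (h : Forall₂ R (l₁ ++ l₂) l) :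
    ∃ m₁ m₂, l = m₁ ++ m₂ ∧ Forall₂ R l₁ m₁ ∧ Forall₂ R l₂ m₂ := by
  induction l₁ generalizing l with
  | nil => exact ⟨[], l, rfl, .nil, h⟩
  | cons a l₁ ih =>
    obtain _ | ⟨hab, h⟩ := h
    obtain ⟨m₁, m₂, rfl, h₁, h₂⟩ := ih h
    exact ⟨_ :: m₁, m₂, rfl, .cons hab h₁, h₂⟩

theorem eq_of_append_cons_eq_append_cons {u v l r : List α} {x y : α}
    (h : u ++ x :: v = l ++ y :: r) (hl : x ∉ l) (hr : x ∉ r) :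
    u = l ∧ x = y ∧ v = r := by
  rcases append_eq_append_iff.1 h with ⟨_ | ⟨z, s⟩, rfl, hs⟩ | ⟨_ | ⟨z, s⟩, rfl, hs⟩ <;>
    simp_all [eq_comm]

theorem replicate_append_replicate_inj {a b : α} (hab : a ≠ b) {m n m' n' : ℕ} :
    replicate m a ++ replicate n b = replicate m' a ++ replicate n' b ↔ m = m' ∧ n = n' := by
  classical
  refine ⟨fun h => ?_, by rintro ⟨rfl, rfl⟩; rfl⟩
  have hcount := congrArg (count a) h
  have hlen := congrArg length h
  simp [count_replicate, hab.symm] at hcount hlen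
  omega

end List

namespace HA

variable {α Q : Type} (A : HA α Q)

def rootLang (f : α) : Language Q :=
  ⨆ r ∈ A.trans, ⨆ _ : r.1 = f ∧ r.2.2 ∈ A.final, r.2.1

theorem isRegular_rootLang (f : α) : (A.rootLang f).IsRegular :=
  Language.isRegular_biSup_list _ _ _ A.regular

theorem node_mem_lang_iff {f : α} {ts : List (UTerm α)} :
    UTerm.node f ts ∈ A.lang ↔ ∃ qs ∈ A.rootLang f, List.Forall₂ A.Reduce ts qs := by
  simp only [lang, rootLang, Language.mem_iSup, List.forall₂_iff_zip]
  constructor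
  · rintro ⟨q, hq, ⟨htr, hqs, hlen, hred⟩⟩
    exact ⟨_, ⟨_, htr, ⟨rfl, hq⟩, hqs⟩, hlen, fun h => hred _ h⟩
  · rintro ⟨qs, ⟨⟨f', L, q⟩, htr, ⟨rfl, hq⟩, hqs⟩, hlen, hred⟩
    exact ⟨q, hq, .node htr hqs hlen fun p hp => hred hp⟩

theorem exists_pump_replicate (f : α) (s : UTerm α) :
    ∃ N, ∀ n ≥ N, ∀ v, UTerm.node f (List.replicate n s ++ v) ∈ A.lang →
      ∃ k, 0 < k ∧ UTerm.node f (List.replicate (n + k) s ++ v) ∈ A.lang := by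
  obtain ⟨N, hN⟩ := (A.isRegular_rootLang f).exists_pump_prefix
  refine ⟨N, fun n hn v hmem => ?_⟩
  obtain ⟨qs, hqs, hred⟩ := A.node_mem_lang_iff.1 hmem
  obtain ⟨qa, qb, rfl, ha, hb⟩ := hred.exists_append_right
  rw [List.forall₂_replicate_left_iff] at ha
  obtain ⟨u, y, w, rfl, hy, hpump⟩ := hN _ _ hqs (ha.1 ▸ hn)
  refine ⟨y.length, List.length_pos_iff.2 hy, A.node_mem_lang_iff.2 ⟨_, hpump, ?_⟩⟩
  -- every state of the pumped prefix already occurs in `qa`, so it still labels a copy of `s`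
  refine List.rel_append (List.forall₂_replicate_left_iff.2 ⟨?_, fun q hq => ha.2 q ?_⟩) hb
  · simp only [List.length_append] at ha ⊢
    omega
  · simp only [List.mem_append] at hq ⊢
    tauto

end HA

notation "𝖺" => UTerm.node (0 : Fin 3) []
notation "𝖻" => UTerm.node (1 : Fin 3) []

open List

theorem Step8.left_ne_nil {h h' : List (UTerm (Fin 3))} (hs : Step8 h h') : h ≠ [] := by
  induction hs <;> simp_all

inductive BalancedHedge : List (UTerm (Fin 3)) → Prop
  | flat (i : ℕ) : BalancedHedge (replicate i 𝖺 ++ replicate i 𝖻)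
  | nest (i : ℕ) {g} :
      BalancedHedge g → BalancedHedge (replicate i 𝖺 ++ UTerm.node 2 g :: replicate i 𝖻)

namespace BalancedHedge

theorem wrap {g : List (UTerm (Fin 3))} (hg : BalancedHedge g) (i : ℕ) :
    BalancedHedge (replicate i 𝖺 ++ g ++ replicate i 𝖻) := by
  obtain j | ⟨j, hg'⟩ := hg
  · convert flat (i + j) using 1
    nth_rw 2 [Nat.add_comm]
    simp only [replicate_add, append_assoc]
  · convert nest (i + j) hg' using 1
    nth_rw 2 [Nat.add_comm]
    simp only [replicate_add, append_assoc, cons_append]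

theorem eq_of_not_leaf {u v : List (UTerm (Fin 3))} {t : UTerm (Fin 3)}
    (h : BalancedHedge (u ++ t :: v)) (ha : t ≠ 𝖺) (hb : t ≠ 𝖻) :
    ∃ i g, u = replicate i 𝖺 ∧ t = UTerm.node 2 g ∧ v = replicate i 𝖻 ∧ BalancedHedge g := by
  generalize hw : u ++ t :: v = w at h
  obtain i | ⟨i, hg⟩ := h
  · have ht : t ∈ replicate i 𝖺 ++ replicate i 𝖻 := hw ▸ by simp
    simp only [mem_append, mem_replicate] at ht
    tauto
  · obtain ⟨rfl, rfl, rfl⟩ := eq_of_append_cons_eq_append_cons hw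
      (by simp [mem_replicate, ha]) (by simp [mem_replicate, hb])
    exact ⟨i, _, rfl, rfl, rfl, hg⟩

theorem of_step {w w' : List (UTerm (Fin 3))} (hs : Step8 w w') :
    ∀ u v, BalancedHedge (u ++ w ++ v) → BalancedHedge (u ++ w' ++ v) := by
  induction hs with
  | rule h =>
    intro u v hb
    obtain ⟨i, g, rfl, hhg, rfl, hg⟩ := eq_of_not_leaf (by simpa using hb) (by simp) (by simp)
    cases hhg
    exact hg.wrap i
  | @context u' v' h h' _ ih =>
    intro u v hb
    simpa using ih (u ++ u') (v' ++ v) (by simpa using hb)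
  | @under f h h' hstep ih =>
    intro u v hb
    obtain ⟨i, g, rfl, hhg, rfl, hg⟩ := eq_of_not_leaf (by simpa using hb)
      (by simp [hstep.left_ne_nil]) (by simp [hstep.left_ne_nil])
    cases hhg
    simpa using nest i (by simpa using ih [] [] (by simpa using hg))

theorem of_nested {t : UTerm (Fin 3)} (ht : Nested t) : BalancedHedge [t] := by
  induction ht with
  | base => exact .nest 0 (.flat 0)
  | step _ ih => exact .nest 0 (by simpa using ih.wrap 1)

theorem of_mem_post8 {t : UTerm (Fin 3)} (ht : t ∈ Post8) : BalancedHedge [t] := by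
  obtain ⟨t₀, hnested, hreach⟩ := ht
  induction hreach with
  | refl => exact .of_nested hnested
  | tail _ hstep ih => simpa using ih.of_step hstep [] []

theorem of_singleton_node {ts : List (UTerm (Fin 3))}
    (h : BalancedHedge [UTerm.node 2 ts]) : BalancedHedge ts := by
  obtain ⟨_, _, -, hts, -, hg⟩ := h.eq_of_not_leaf (u := []) (by simp) (by simp)
  cases hts
  exact hg

theorem eq_replicate_of_leaves {ts : List (UTerm (Fin 3))} (h : BalancedHedge ts)
    (hts : ∀ s ∈ ts, s = 𝖺 ∨ s = 𝖻) : ∃ n, ts = replicate n 𝖺 ++ replicate n 𝖻 := by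
  obtain i | @⟨i, g, -⟩ := h
  · exact ⟨i, rfl⟩
  · simpa using hts (UTerm.node 2 g) (by simp)

end BalancedHedge

theorem Step8.node_append_cons {x y : UTerm (Fin 3)} (h : Step8 [x] [y]) (f : Fin 3)
    (u v : List (UTerm (Fin 3))) :
    Step8 [UTerm.node f (u ++ x :: v)] [UTerm.node f (u ++ y :: v)] := by
  simpa using (h.context (u := u) (v := v)).under (f := f)

theorem node_replicate_mem_post8 (n : ℕ) :
    UTerm.node 2 (replicate n 𝖺 ++ replicate n 𝖻) ∈ Post8 := by
  induction n with
  | zero => exact ⟨_, .base, .refl⟩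
  | succ n ih =>
    obtain ⟨t, ht, hreach⟩ := ih
    refine ⟨_, ht.step, ?_⟩
    have hinner := hreach.lift (p := fun x y => Step8 [x] [y])
      (fun x => UTerm.node 2 [𝖺, x, 𝖻]) fun x y h => by simpa using h.node_append_cons 2 [𝖺] [𝖻]
    refine hinner.tail ?_
    have hlast := ((Step8.rule (replicate n 𝖺 ++ replicate n 𝖻)).context
      (u := [𝖺]) (v := [𝖻])).under (f := 2)
    rw [replicate_succ, replicate_succ']
    simpa using hlast

theorem post8_inter_leaf_children_eq :
    Post8 ∩ {u | ∃ ts, u = UTerm.node 2 ts ∧ ∀ s ∈ ts, s = 𝖺 ∨ s = 𝖻} =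
      {u | ∃ n : ℕ, u = UTerm.node 2 (replicate n 𝖺 ++ replicate n 𝖻)} := by
  ext u
  constructor
  · rintro ⟨hu, ts, rfl, hts⟩
    obtain ⟨n, rfl⟩ := (BalancedHedge.of_mem_post8 hu).of_singleton_node.eq_replicate_of_leaves hts
    exact ⟨n, rfl⟩
  · rintro ⟨n, rfl⟩
    refine ⟨node_replicate_mem_post8 n, _, rfl, fun s hs => ?_⟩
    simp only [mem_append, mem_replicate] at hs
    tauto

theorem not_isHALang_post8 : ¬ IsHALang Post8 := by
  rintro ⟨Q, -, A, hA⟩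
  obtain ⟨N, hN⟩ := A.exists_pump_replicate 2 𝖺
  obtain ⟨k, hk, hmem⟩ := hN N le_rfl _ (hA ▸ node_replicate_mem_post8 N)
  have hleaves : ∀ s ∈ replicate (N + k) 𝖺 ++ replicate N 𝖻, s = 𝖺 ∨ s = 𝖻 := by
    simp only [mem_append, mem_replicate]
    tauto
  have hpost : UTerm.node 2 (replicate (N + k) 𝖺 ++ replicate N 𝖻) ∈ Post8 := hA ▸ hmem
  obtain ⟨m, hm⟩ := post8_inter_leaf_children_eq.subset ⟨hpost, _, rfl, hleaves⟩
  rw [UTerm.node.injEq, replicate_append_replicate_inj (by simp)] at hm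
  omega

/-- `post*(L) ∩ { c(w) | w ∈ {a,b}* } = { c(aⁿbⁿ) | n ≥ 0 }`, and
consequently `post*(L)` is not a hedge-automaton language. -/
theorem post_star_nested_not_ha :
    (Post8 ∩
        { u : UTerm (Fin 3) | ∃ ts : List (UTerm (Fin 3)), u = UTerm.node 2 ts ∧
            ∀ s ∈ ts, s = UTerm.node 0 [] ∨ s = UTerm.node 1 [] } =
      { u : UTerm (Fin 3) | ∃ n : ℕ, u =
          UTerm.node 2 (List.replicate n (UTerm.node 0 []) ++
            List.replicate n (UTerm.node 1 [])) }) ∧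
    ¬ IsHALang Post8 :=
  ⟨post8_inter_leaf_children_eq, not_isHALang_post8⟩
end
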